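/- Let K be a field of characteristic different from 2 and let a, b be nonzero elements of K. Then the quaternion algebra ℍ[K,a,b] is isomorphic as a K-algebra to the algebra of 2×2 matrices over K if and only if the quadratic form x² − a·y² − b·z² + a·b·w² in four variables has a nontrivial zero over K. -/

import Mathlib

/-!
A split quaternion algebra contains a nonzero `u` with `u² = 0`; since `u * star u = N(u)` is a
scalar, `N(u) u = u² (star u) = 0`, so `N(u) = 0`. Conversely, a nontrivial zero of the norm form
exhibits `b` as a norm `p² - a q²` from `K(√a)`, and then `!![0, a; 1, 0]` and `!![p, -a q; q, -p]`
satisfy the defining relations of `ℍ[K,a,b]`. The resulting homomorphism into `M₂(K)` is injective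
because the trace form of `ℍ[K,a,b]` is nondegenerate, hence bijective by dimension count.
-/

open Quaternion

theorem exists_ne_zero_mul_self_eq_zero {R A : Type*} [Semiring R] [Nontrivial R] [Semiring A]
    (e : A ≃+* Matrix (Fin 2) (Fin 2) R) :
    ∃ u : A, u ≠ 0 ∧ u * u = 0 := by
  refine ⟨e.symm (Matrix.single 0 1 1), ?_, ?_⟩
  · rw [Ne, EmbeddingLike.map_eq_zero_iff]
    intro h
    simpa using congrFun₂ h 0 1
  · rw [← map_mul, Matrix.single_mul_single_of_ne _ _ _ _ (by decide), map_zero]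

section SqSubMulSq

variable {K : Type*} [Field K] {a : K}

theorem exists_sq_sub_mul_sq_eq_of_isSquare (h2 : (2 : K) ≠ 0) (ha : IsSquare a) (ha0 : a ≠ 0)
    (b : K) : ∃ p q : K, p ^ 2 - a * q ^ 2 = b := by
  obtain ⟨c, rfl⟩ := ha
  have hc : c ≠ 0 := by rintro rfl; simp at ha0
  -- `b = ((b + 1) / 2)² - ((b - 1) / 2)²`
  refine ⟨(b + 1) / 2, (b - 1) / (2 * c), ?_⟩
  field_simp
  ring

theorem eq_zero_of_sq_sub_mul_sq_eq_zero (ha : ¬IsSquare a) {z w : K}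
    (h : z ^ 2 - a * w ^ 2 = 0) : z = 0 ∧ w = 0 := by
  obtain rfl : w = 0 := by
    by_contra hw
    exact ha ⟨z / w, by field_simp; linear_combination -h⟩
  simpa using h

theorem exists_sq_sub_mul_sq_eq_of_isotropic (h2 : (2 : K) ≠ 0) (ha : a ≠ 0) {b x y z w : K}
    (hne : ¬(x = 0 ∧ y = 0 ∧ z = 0 ∧ w = 0))
    (h : x ^ 2 - a * y ^ 2 - b * z ^ 2 + a * b * w ^ 2 = 0) :
    ∃ p q : K, p ^ 2 - a * q ^ 2 = b := by
  by_cases hsq : IsSquare a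
  · exact exists_sq_sub_mul_sq_eq_of_isSquare h2 hsq ha b
  have hd : z ^ 2 - a * w ^ 2 ≠ 0 := by
    intro hd
    obtain ⟨rfl, rfl⟩ := eq_zero_of_sq_sub_mul_sq_eq_zero hsq hd
    obtain ⟨rfl, rfl⟩ := eq_zero_of_sq_sub_mul_sq_eq_zero (z := x) (w := y) hsq
      (by linear_combination h)
    exact hne ⟨rfl, rfl, rfl, rfl⟩
  -- `p + q√a = (x + y√a) / (z + w√a)`
  refine ⟨(x * z - a * y * w) / (z ^ 2 - a * w ^ 2), (y * z - x * w) / (z ^ 2 - a * w ^ 2), ?_⟩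
  field_simp
  linear_combination (z ^ 2 - a * w ^ 2) * h

end SqSubMulSq

namespace QuaternionAlgebra

section CommRing

variable {R : Type*} [CommRing R] {a b : R}

theorem re_mul_star (u : ℍ[R,a,b]) :
    (u * star u).re = u.re ^ 2 - a * u.imI ^ 2 - b * u.imJ ^ 2 + a * b * u.imK ^ 2 := by
  simp only [re_mul, re_star, imI_star, imJ_star, imK_star]
  ring

theorem eq_zero_of_forall_re_mul_eq_zero [NoZeroDivisors R] (ha : a ≠ 0) (hb : b ≠ 0)
    {x : ℍ[R,a,b]} (h : ∀ y, (y * x).re = 0) : x = 0 := by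
  have hre : x.re = 0 := by simpa using h 1
  have hI : a * x.imI = 0 := by simpa using h ⟨0, 1, 0, 0⟩
  have hJ : b * x.imJ = 0 := by simpa using h ⟨0, 0, 1, 0⟩
  have hK : a * b * x.imK = 0 := by simpa using h ⟨0, 0, 0, 1⟩
  ext
  · exact hre
  · exact (mul_eq_zero.mp hI).resolve_left ha
  · exact (mul_eq_zero.mp hJ).resolve_left hb
  · exact (mul_eq_zero.mp hK).resolve_left (mul_ne_zero ha hb)

def Basis.ofSqSubMulSqEq {p q : R} (h : p ^ 2 - a * q ^ 2 = b) :
    Basis (Matrix (Fin 2) (Fin 2) R) a 0 b where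
  i := !![0, a; 1, 0]
  j := !![p, -(a * q); q, -p]
  k := !![a * q, -(a * p); p, -(a * q)]
  i_mul_i := by
    rw [Matrix.mul_fin_two]
    ext i j; fin_cases i <;> fin_cases j <;> simp
  j_mul_j := by
    rw [Matrix.mul_fin_two, ← h]
    ext i j; fin_cases i <;> fin_cases j <;> simp <;> ring
  i_mul_j := by
    rw [Matrix.mul_fin_two]
    ext i j; fin_cases i <;> fin_cases j <;> simp
  j_mul_i := by
    rw [Matrix.mul_fin_two]
    ext i j; fin_cases i <;> fin_cases j <;> simp <;> ring

end CommRing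

variable {K : Type*} [Field K] {a b : K}

theorem re_mul_star_eq_zero_of_mul_self_eq_zero {c₁ c₂ c₃ : K} {u : ℍ[K,c₁,c₂,c₃]} (hu : u ≠ 0)
    (huu : u * u = 0) : (u * star u).re = 0 := by
  have h : (u * star u).re • u = 0 := by
    rw [← mul_coe_eq_smul, ← mul_star_eq_coe, ← mul_assoc, huu, zero_mul]
  exact (smul_eq_zero.mp h).resolve_right hu

theorem map_eq_re_smul_map_one {M : Type*} [AddCommGroup M] [Module K M] (h2 : (2 : K) ≠ 0)
    (ha : a ≠ 0) (hb : b ≠ 0) (f : ℍ[K,a,b] →ₗ[K] M) (hf : ∀ x y, f (x * y) = f (y * x))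
    (x : ℍ[K,a,b]) : f x = x.re • f 1 := by
  set B := Basis.self K (c₁ := a) (c₂ := 0) (c₃ := b)
  -- each of `k`, `a j`, `b i` is a product `u v` of basis elements with `v u = -(u v)`
  have hk : (2 : K) • f B.k = 0 := by
    have h := hf B.i B.j
    rw [B.i_mul_j, B.j_mul_i] at h
    simp only [zero_smul, zero_sub, map_neg] at h
    linear_combination (norm := module) h
  have hj : (2 * a) • f B.j = 0 := by
    have h := hf B.i B.k
    rw [B.i_mul_k, B.k_mul_i] at h
    simp only [zero_smul, add_zero, map_smul, neg_smul, map_neg] at h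
    linear_combination (norm := module) h
  have hi : (2 * b) • f B.i = 0 := by
    have h := hf B.k B.j
    rw [B.k_mul_j, B.j_mul_k] at h
    simp only [map_smul, zero_mul, zero_smul, zero_sub, map_neg] at h
    linear_combination (norm := module) h
  have hx : x = x.re • 1 + x.imI • B.i + x.imJ • B.j + x.imK • B.k := by
    ext <;> simp [B]
  conv_lhs => rw [hx]
  simp [(smul_eq_zero.mp hi).resolve_left (mul_ne_zero h2 hb),
    (smul_eq_zero.mp hj).resolve_left (mul_ne_zero h2 ha), (smul_eq_zero.mp hk).resolve_left h2]

theorem Basis.liftHom_injective {n : Type*} [Fintype n] [DecidableEq n] (h2 : (2 : K) ≠ 0)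
    (hn : (Fintype.card n : K) ≠ 0) (ha : a ≠ 0) (hb : b ≠ 0) (B : Basis (Matrix n n K) a 0 b) :
    Function.Injective B.liftHom := by
  let t : ℍ[K,a,b] →ₗ[K] K := Matrix.traceLinearMap n K K ∘ₗ B.liftHom.toLinearMap
  have ht_apply (x : ℍ[K,a,b]) : t x = (B.liftHom x).trace := rfl
  have ht (x : ℍ[K,a,b]) : t x = x.re * Fintype.card n := by
    refine (map_eq_re_smul_map_one h2 ha hb t (fun x y => ?_) x).trans ?_
    · rw [ht_apply, ht_apply, map_mul, map_mul, Matrix.trace_mul_comm]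
    · rw [ht_apply, map_one, Matrix.trace_one, smul_eq_mul]
  rw [injective_iff_map_eq_zero]
  refine fun x hx => eq_zero_of_forall_re_mul_eq_zero ha hb fun y => ?_
  have h := ht (y * x)
  rw [ht_apply, map_mul, hx, mul_zero, Matrix.trace_zero, eq_comm, mul_eq_zero] at h
  exact h.resolve_right hn

theorem Basis.liftHom_bijective (h2 : (2 : K) ≠ 0) (ha : a ≠ 0) (hb : b ≠ 0)
    (B : Basis (Matrix (Fin 2) (Fin 2) K) a 0 b) : Function.Bijective B.liftHom := by
  have hinj := B.liftHom_injective h2 (by simpa using h2) ha hb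
  have hdim : Module.finrank K ℍ[K,a,b] = Module.finrank K (Matrix (Fin 2) (Fin 2) K) := by
    rw [finrank_eq_four, Module.finrank_matrix]
    simp
  exact ⟨hinj, (LinearMap.injective_iff_surjective_of_finrank_eq_finrank
    (f := B.liftHom.toLinearMap) hdim).mp hinj⟩

end QuaternionAlgebra

open QuaternionAlgebra in
/-- For a field `K` of characteristic ≠ 2 and nonzero `a b : K`, the quaternion
algebra `ℍ[K,a,b]` is isomorphic to the 2×2 matrix algebra over `K` iff its norm form
`x² − a y² − b z² + a b w²` has a nontrivial zero over `K`. -/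
theorem quaternionAlgebra_iso_matrix_iff_norm_form_has_nontrivial_zero
    (K : Type*) [Field K] (hchar : ringChar K ≠ 2) (a b : K) (ha : a ≠ 0) (hb : b ≠ 0) :
    Nonempty (ℍ[K, a, b] ≃ₐ[K] Matrix (Fin 2) (Fin 2) K) ↔
      ∃ x y z w : K, ¬ (x = 0 ∧ y = 0 ∧ z = 0 ∧ w = 0) ∧
        x ^ 2 - a * y ^ 2 - b * z ^ 2 + a * b * w ^ 2 = 0 := by
  have h2 : (2 : K) ≠ 0 := Ring.two_ne_zero hchar
  constructor
  · rintro ⟨e⟩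
    obtain ⟨u, hu, huu⟩ := exists_ne_zero_mul_self_eq_zero e.toRingEquiv
    refine ⟨u.re, u.imI, u.imJ, u.imK, fun h => hu ?_, ?_⟩
    · ext <;> simp [h]
    · rw [← re_mul_star]
      exact re_mul_star_eq_zero_of_mul_self_eq_zero hu huu
  · rintro ⟨x, y, z, w, hne, h⟩
    obtain ⟨p, q, hpq⟩ := exists_sq_sub_mul_sq_eq_of_isotropic h2 ha hne h
    exact ⟨.ofBijective _ ((Basis.ofSqSubMulSqEq hpq).liftHom_bijective h2 ha hb)⟩
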